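/- arXiv:2212.00441 — 2 statements merged into one kernel-verified Lean document; each statement's English description precedes it below -/
import Mathlib

section
/- Let E, F be Banach lattices and P a linear subspace of L(E,F). Define ‖T‖_{r-P} := inf{‖S‖ : S ∈ P, -S ≤ T ≤ S} for T ∈ r-P(E,F). Then ‖·‖_{r-P} is a norm on the vector space r-P(E,F) of regularly P-operators. -/
open Filter Topology

variable {E F : Type*}
  [NormedAddCommGroup E] [Lattice E] [HasSolidNorm E] [IsOrderedAddMonoid E] [NormedSpace ℝ E] [CompleteSpace E]
  [NormedAddCommGroup F] [Lattice F] [HasSolidNorm F] [IsOrderedAddMonoid F] [NormedSpace ℝ F] [CompleteSpace F]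

/-- A continuous operator is positive if it maps the positive cone into the positive cone. -/
def IsPosOp (T : E →L[ℝ] F) : Prop := ∀ x : E, 0 ≤ x → 0 ≤ T x

/-- The operator order: `S ≤ T` iff `T - S` is positive. -/
def OpLE (S T : E →L[ℝ] F) : Prop := IsPosOp (T - S)

/-- `T` is a regularly `P`-operator: `T = T₁ - T₂` with `T₁, T₂ ∈ P` positive. -/
def IsRegPOp (P : Set (E →L[ℝ] F)) (T : E →L[ℝ] F) : Prop :=
  ∃ T₁ T₂ : E →L[ℝ] F, T₁ ∈ P ∧ T₂ ∈ P ∧ IsPosOp T₁ ∧ IsPosOp T₂ ∧ T = T₁ - T₂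

/-- The enveloping norm of `T` relative to `P`:
`‖T‖_{r-P} = inf {‖S‖ : S ∈ P, -S ≤ T ≤ S}`. -/
noncomputable def envNorm (P : Set (E →L[ℝ] F)) (T : E →L[ℝ] F) : ℝ :=
  sInf {c : ℝ | ∃ S ∈ P, OpLE (-S) T ∧ OpLE T S ∧ c = ‖S‖}

set_option linter.unusedSectionVars false

private lemma aux_pow_two {G : Type*} [Lattice G] [AddCommGroup G]
    [CovariantClass G G (· + ·) (· ≤ ·)]
    (k : ℕ) (y : G) (h : 0 ≤ (2 ^ k) • y) : 0 ≤ y := by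
  induction k generalizing y with
  | zero => simpa using h
  | succ k ih =>
    have h2 : (2 ^ (k + 1)) • y = (2 ^ k) • (2 • y) := by
      rw [pow_succ, mul_comm, mul_nsmul]
    exact nsmul_two_semiclosed (ih (2 • y) (h2 ▸ h))

/-- Scalar multiplication by a nonnegative real preserves positivity, via closedness
of the positive cone and dyadic approximation. -/
private lemma real_smul_nonneg {c : ℝ} (hc : 0 ≤ c) {x : F} (hx : 0 ≤ x) : 0 ≤ c • x := by
  have hclosed : IsClosed {y : F | 0 ≤ y} := isClosed_nonneg
  have h1 : Tendsto (fun n : ℕ => (⌊c * (n : ℝ)⌋₊ : ℝ) / (n : ℝ)) atTop (𝓝 c) :=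
    (tendsto_nat_floor_mul_div_atTop hc).comp tendsto_natCast_atTop_atTop
  have h2 : Tendsto (fun k : ℕ => (2 : ℕ) ^ k) atTop atTop :=
    tendsto_pow_atTop_atTop_of_one_lt one_lt_two
  have htend : Tendsto
      (fun k : ℕ => ((⌊c * (((2:ℕ) ^ k : ℕ) : ℝ)⌋₊ : ℝ) / (((2:ℕ) ^ k : ℕ) : ℝ)) • x)
      atTop (𝓝 (c • x)) := (h1.comp h2).smul_const x
  refine hclosed.mem_of_tendsto htend (Eventually.of_forall fun k => ?_)
  show (0 : F) ≤ _
  set m : ℕ := ⌊c * (((2:ℕ) ^ k : ℕ) : ℝ)⌋₊ with hm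
  apply aux_pow_two k
  have key : (2 ^ k) • (((m : ℝ) / (((2:ℕ) ^ k : ℕ) : ℝ)) • x) = m • x := by
    rw [← Nat.cast_smul_eq_nsmul ℝ (2 ^ k), ← Nat.cast_smul_eq_nsmul ℝ m, smul_smul]
    congr 1
    have hne : (((2:ℕ) ^ k : ℕ) : ℝ) ≠ 0 := by positivity
    push_cast
    push_cast at hne
    field_simp
  rw [key]
  exact nsmul_nonneg hx m

private lemma opLE_iff {S T : E →L[ℝ] F} : OpLE S T ↔ ∀ x : E, 0 ≤ x → S x ≤ T x := by
  unfold OpLE IsPosOp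
  constructor
  · intro h x hx
    have := h x hx
    rw [ContinuousLinearMap.sub_apply] at this
    exact sub_nonneg.mp this
  · intro h x hx
    rw [ContinuousLinearMap.sub_apply]
    exact sub_nonneg.mpr (h x hx)

/-- From `-S ≤ T`, pointwise `0 ≤ T x + S x` on the positive cone. -/
private lemma add_nonneg_of_opLE {S T : E →L[ℝ] F} (h : OpLE (-S) T) {x : E} (hx : 0 ≤ x) :
    0 ≤ T x + S x := by
  have := opLE_iff.mp h x hx
  rw [ContinuousLinearMap.neg_apply] at this
  have h2 := sub_nonneg.mpr this
  rwa [sub_neg_eq_add] at h2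

/-- From `T ≤ S`, pointwise `0 ≤ S x - T x` on the positive cone. -/
private lemma sub_nonneg_of_opLE {S T : E →L[ℝ] F} (h : OpLE T S) {x : E} (hx : 0 ≤ x) :
    0 ≤ S x - T x :=
  sub_nonneg.mpr (opLE_iff.mp h x hx)

/-- `-S ≤ T ≤ S` implies `‖T x‖ ≤ 2 ‖S‖ ‖x‖`. -/
private lemma norm_apply_le_of_opLE {S T : E →L[ℝ] F} (h1 : OpLE (-S) T) (h2 : OpLE T S)
    (x : E) : ‖T x‖ ≤ 2 * ‖S‖ * ‖x‖ := by
  have key : ∀ y : E, 0 ≤ y → ‖T y‖ ≤ ‖S y‖ := by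
    intro y hy
    have hTS : T y ≤ S y := opLE_iff.mp h2 y hy
    have hST : -(T y) ≤ S y := by
      have h0 := add_nonneg_of_opLE h1 hy
      have h3 : S y - (-(T y)) = T y + S y := by abel
      exact sub_nonneg.mp (by rw [h3]; exact h0)
    have habs : |T y| ≤ S y := abs_le'.mpr ⟨hTS, hST⟩
    have hSy : |S y| = S y := abs_of_nonneg ((abs_nonneg _).trans habs)
    exact HasSolidNorm.solid (hSy.symm ▸ habs)
  have hxpos : ‖T x⁺‖ ≤ ‖S‖ * ‖x‖ := by
    refine (key _ (posPart_nonneg x)).trans ((S.le_opNorm _).trans ?_)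
    gcongr
    refine HasSolidNorm.solid ?_
    rw [abs_of_nonneg (posPart_nonneg x)]
    exact sup_le (le_abs_self x) (abs_nonneg x)
  have hxneg : ‖T x⁻‖ ≤ ‖S‖ * ‖x‖ := by
    refine (key _ (negPart_nonneg x)).trans ((S.le_opNorm _).trans ?_)
    gcongr
    refine HasSolidNorm.solid ?_
    rw [abs_of_nonneg (negPart_nonneg x)]
    exact sup_le (neg_le_abs x) (abs_nonneg x)
  calc ‖T x‖ = ‖T x⁺ - T x⁻‖ := by rw [← map_sub, posPart_sub_negPart]
    _ ≤ ‖T x⁺‖ + ‖T x⁻‖ := norm_sub_le _ _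
    _ ≤ ‖S‖ * ‖x‖ + ‖S‖ * ‖x‖ := add_le_add hxpos hxneg
    _ = 2 * ‖S‖ * ‖x‖ := by ring

private lemma envSet_bddBelow (P : Set (E →L[ℝ] F)) (T : E →L[ℝ] F) :
    BddBelow {c : ℝ | ∃ S ∈ P, OpLE (-S) T ∧ OpLE T S ∧ c = ‖S‖} :=
  ⟨0, fun _ ⟨S, _, _, _, hc⟩ => hc ▸ norm_nonneg S⟩

private lemma envSet_nonempty (P : Submodule ℝ (E →L[ℝ] F)) {T : E →L[ℝ] F}
    (h : IsRegPOp (P : Set (E →L[ℝ] F)) T) :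
    Set.Nonempty {c : ℝ | ∃ S ∈ (P : Set (E →L[ℝ] F)), OpLE (-S) T ∧ OpLE T S ∧ c = ‖S‖} := by
  obtain ⟨T₁, T₂, hT₁, hT₂, hp₁, hp₂, rfl⟩ := h
  refine ⟨‖T₁ + T₂‖, T₁ + T₂, P.add_mem hT₁ hT₂, ?_, ?_, rfl⟩
  · rw [opLE_iff]
    intro x hx
    simp only [ContinuousLinearMap.neg_apply, ContinuousLinearMap.add_apply,
      ContinuousLinearMap.sub_apply]
    have h0 := add_nonneg (hp₁ x hx) (hp₁ x hx)
    have e : T₁ x - T₂ x - -(T₁ x + T₂ x) = T₁ x + T₁ x := by abel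
    exact sub_nonneg.mp (by rw [e]; exact h0)
  · rw [opLE_iff]
    intro x hx
    simp only [ContinuousLinearMap.add_apply, ContinuousLinearMap.sub_apply]
    have h0 := add_nonneg (hp₂ x hx) (hp₂ x hx)
    have e : T₁ x + T₂ x - (T₁ x - T₂ x) = T₂ x + T₂ x := by abel
    exact sub_nonneg.mp (by rw [e]; exact h0)

private lemma envNorm_zero' (P : Submodule ℝ (E →L[ℝ] F)) :
    envNorm (P : Set (E →L[ℝ] F)) (0 : E →L[ℝ] F) = 0 := by
  have h0 : (0 : ℝ) ∈ {c : ℝ | ∃ S ∈ (P : Set (E →L[ℝ] F)),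
      OpLE (-S) (0 : E →L[ℝ] F) ∧ OpLE (0 : E →L[ℝ] F) S ∧ c = ‖S‖} := by
    refine ⟨0, P.zero_mem, ?_, ?_, by simp⟩
    · rw [opLE_iff]; intro x hx; simp
    · rw [opLE_iff]; intro x hx; simp
  refine le_antisymm (csInf_le (envSet_bddBelow _ _) h0) ?_
  exact le_csInf ⟨0, h0⟩ fun b ⟨S, _, _, _, hb⟩ => hb ▸ norm_nonneg S

/-- If `a` is in the envelope set of `T`, then `|c| * a` is in the envelope set of `c • T`. -/
private lemma smul_mem_envSet (P : Submodule ℝ (E →L[ℝ] F)) {T : E →L[ℝ] F} (c : ℝ) {a : ℝ}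
    (ha : a ∈ {b : ℝ | ∃ S ∈ (P : Set (E →L[ℝ] F)), OpLE (-S) T ∧ OpLE T S ∧ b = ‖S‖}) :
    |c| * a ∈ {b : ℝ | ∃ S ∈ (P : Set (E →L[ℝ] F)),
      OpLE (-S) (c • T) ∧ OpLE (c • T) S ∧ b = ‖S‖} := by
  obtain ⟨S, hS, h1, h2, rfl⟩ := ha
  refine ⟨|c| • S, P.smul_mem _ hS, ?_, ?_,
    (by rw [norm_smul |c| S, Real.norm_eq_abs, abs_abs] : ‖|c| • S‖ = |c| * ‖S‖).symm⟩
  · rw [opLE_iff]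
    intro x hx
    simp only [ContinuousLinearMap.neg_apply, ContinuousLinearMap.smul_apply]
    refine sub_nonneg.mp ?_
    rw [sub_neg_eq_add]
    rcases le_or_gt 0 c with hc | hc
    · rw [abs_of_nonneg hc]
      have e : c • T x + c • S x = c • (T x + S x) := by rw [smul_add]
      rw [e]
      exact real_smul_nonneg hc (add_nonneg_of_opLE h1 hx)
    · rw [abs_of_neg hc]
      have e : c • T x + (-c) • S x = (-c) • (S x - T x) := by
        rw [smul_sub, neg_smul, neg_smul]; abel
      rw [e]
      exact real_smul_nonneg (neg_nonneg.mpr hc.le) (sub_nonneg_of_opLE h2 hx)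
  · rw [opLE_iff]
    intro x hx
    simp only [ContinuousLinearMap.smul_apply]
    refine sub_nonneg.mp ?_
    rcases le_or_gt 0 c with hc | hc
    · rw [abs_of_nonneg hc]
      have e : c • S x - c • T x = c • (S x - T x) := by rw [smul_sub]
      rw [e]
      exact real_smul_nonneg hc (sub_nonneg_of_opLE h2 hx)
    · rw [abs_of_neg hc]
      have e : (-c) • S x - c • T x = (-c) • (T x + S x) := by
        rw [smul_add, neg_smul, neg_smul]; abel
      rw [e]
      exact real_smul_nonneg (neg_nonneg.mpr hc.le) (add_nonneg_of_opLE h1 hx)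

/-- The triangle-inequality building block. -/
private lemma envNorm_add_le_mem (P : Submodule ℝ (E →L[ℝ] F)) {T₁ T₂ : E →L[ℝ] F} {a b : ℝ}
    (ha : a ∈ {c : ℝ | ∃ S ∈ (P : Set (E →L[ℝ] F)), OpLE (-S) T₁ ∧ OpLE T₁ S ∧ c = ‖S‖})
    (hb : b ∈ {c : ℝ | ∃ S ∈ (P : Set (E →L[ℝ] F)), OpLE (-S) T₂ ∧ OpLE T₂ S ∧ c = ‖S‖}) :
    envNorm (P : Set (E →L[ℝ] F)) (T₁ + T₂) ≤ a + b := by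
  obtain ⟨S₁, hS₁, h11, h12, rfl⟩ := ha
  obtain ⟨S₂, hS₂, h21, h22, rfl⟩ := hb
  have hmem : ‖S₁ + S₂‖ ∈ {c : ℝ | ∃ S ∈ (P : Set (E →L[ℝ] F)),
      OpLE (-S) (T₁ + T₂) ∧ OpLE (T₁ + T₂) S ∧ c = ‖S‖} := by
    refine ⟨S₁ + S₂, P.add_mem hS₁ hS₂, ?_, ?_, rfl⟩
    · rw [opLE_iff]
      intro x hx
      simp only [ContinuousLinearMap.neg_apply, ContinuousLinearMap.add_apply]
      refine sub_nonneg.mp ?_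
      rw [sub_neg_eq_add]
      have e : T₁ x + T₂ x + (S₁ x + S₂ x) = (T₁ x + S₁ x) + (T₂ x + S₂ x) := by abel
      rw [e]
      exact add_nonneg (add_nonneg_of_opLE h11 hx) (add_nonneg_of_opLE h21 hx)
    · rw [opLE_iff]
      intro x hx
      simp only [ContinuousLinearMap.add_apply]
      refine sub_nonneg.mp ?_
      have e : S₁ x + S₂ x - (T₁ x + T₂ x) = (S₁ x - T₁ x) + (S₂ x - T₂ x) := by abel
      rw [e]
      exact add_nonneg (sub_nonneg_of_opLE h12 hx) (sub_nonneg_of_opLE h22 hx)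
  exact (csInf_le (envSet_bddBelow _ _) hmem).trans (norm_add_le _ _)

/-- The enveloping norm is a norm on the space of regularly `P`-operators:
it is nonnegative, definite, absolutely homogeneous and satisfies the triangle
inequality. -/
theorem envNorm_is_norm (P : Submodule ℝ (E →L[ℝ] F)) :
    (∀ T : E →L[ℝ] F, IsRegPOp (P : Set (E →L[ℝ] F)) T →
      0 ≤ envNorm (P : Set (E →L[ℝ] F)) T) ∧
    (∀ T : E →L[ℝ] F, IsRegPOp (P : Set (E →L[ℝ] F)) T →
      (envNorm (P : Set (E →L[ℝ] F)) T = 0 ↔ T = 0)) ∧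
    (∀ T : E →L[ℝ] F, IsRegPOp (P : Set (E →L[ℝ] F)) T → ∀ c : ℝ,
      envNorm (P : Set (E →L[ℝ] F)) (c • T) = |c| * envNorm (P : Set (E →L[ℝ] F)) T) ∧
    (∀ T₁ T₂ : E →L[ℝ] F, IsRegPOp (P : Set (E →L[ℝ] F)) T₁ →
      IsRegPOp (P : Set (E →L[ℝ] F)) T₂ →
      envNorm (P : Set (E →L[ℝ] F)) (T₁ + T₂) ≤
        envNorm (P : Set (E →L[ℝ] F)) T₁ + envNorm (P : Set (E →L[ℝ] F)) T₂) := by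
  have hnonneg : ∀ T : E →L[ℝ] F, IsRegPOp (P : Set (E →L[ℝ] F)) T →
      0 ≤ envNorm (P : Set (E →L[ℝ] F)) T := fun T hT =>
    le_csInf (envSet_nonempty P hT) fun b ⟨S, _, _, _, hb⟩ => hb ▸ norm_nonneg S
  refine ⟨hnonneg, ?_, ?_, ?_⟩
  · -- definiteness
    intro T hT
    constructor
    · intro h0
      ext x
      rw [ContinuousLinearMap.zero_apply]
      have hx0 : ‖T x‖ ≤ 0 := by
        refine le_of_forall_pos_le_add fun ε hε => ?_
        have hne := envSet_nonempty P hT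
        have hδ : (0:ℝ) < ε / (2 * ‖x‖ + 1) := by positivity
        have hlt : envNorm (P : Set (E →L[ℝ] F)) T < ε / (2 * ‖x‖ + 1) := by
          rw [h0]; exact hδ
        obtain ⟨a, ⟨S, hS, h1, h2, rfl⟩, hlt'⟩ := exists_lt_of_csInf_lt hne hlt
        have hb := norm_apply_le_of_opLE h1 h2 x
        have h' : ‖S‖ * (2 * ‖x‖ + 1) < ε := (lt_div_iff₀ (by positivity)).mp hlt'
        nlinarith [norm_nonneg S, norm_nonneg x]
      exact norm_le_zero_iff.mp hx0
    · rintro rfl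
      exact envNorm_zero' P
  · -- homogeneity
    intro T hT c
    rcases eq_or_ne c 0 with rfl | hc
    · rw [zero_smul, envNorm_zero' P, abs_zero, zero_mul]
    · have hcpos : (0 : ℝ) < |c| := abs_pos.mpr hc
      refine le_antisymm ?_ ?_
      · have hdiv : envNorm (P : Set (E →L[ℝ] F)) (c • T) / |c| ≤
            envNorm (P : Set (E →L[ℝ] F)) T := by
          refine le_csInf (envSet_nonempty P hT) fun a ha => ?_
          have hle := csInf_le (envSet_bddBelow (P : Set (E →L[ℝ] F)) (c • T))
            (smul_mem_envSet P c ha)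
          rw [div_le_iff₀ hcpos, mul_comm]
          exact hle
        calc envNorm (P : Set (E →L[ℝ] F)) (c • T)
            = |c| * (envNorm (P : Set (E →L[ℝ] F)) (c • T) / |c|) := by
              field_simp
          _ ≤ |c| * envNorm (P : Set (E →L[ℝ] F)) T := by
              exact mul_le_mul_of_nonneg_left hdiv hcpos.le
      · obtain ⟨a, ha⟩ := envSet_nonempty P hT
        refine le_csInf ⟨|c| * a, smul_mem_envSet P c ha⟩ fun b hb => ?_
        have hmem := smul_mem_envSet P c⁻¹ hb
        rw [smul_smul, inv_mul_cancel₀ hc, one_smul] at hmem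
        have hle := csInf_le (envSet_bddBelow (P : Set (E →L[ℝ] F)) T) hmem
        rw [abs_inv] at hle
        calc |c| * envNorm (P : Set (E →L[ℝ] F)) T
            ≤ |c| * (|c|⁻¹ * b) := mul_le_mul_of_nonneg_left hle hcpos.le
          _ = b := by field_simp
  · -- triangle inequality
    intro T₁ T₂ h₁ h₂
    have step1 : ∀ b ∈ {c : ℝ | ∃ S ∈ (P : Set (E →L[ℝ] F)), OpLE (-S) T₂ ∧ OpLE T₂ S ∧ c = ‖S‖},
        envNorm (P : Set (E →L[ℝ] F)) (T₁ + T₂) - b ≤ envNorm (P : Set (E →L[ℝ] F)) T₁ := by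
      intro b hb
      refine le_csInf (envSet_nonempty P h₁) fun a ha => ?_
      exact sub_le_iff_le_add.mpr (envNorm_add_le_mem P ha hb)
    have step2 : envNorm (P : Set (E →L[ℝ] F)) (T₁ + T₂) - envNorm (P : Set (E →L[ℝ] F)) T₁ ≤
        envNorm (P : Set (E →L[ℝ] F)) T₂ := by
      refine le_csInf (envSet_nonempty P h₂) fun b hb => ?_
      have := step1 b hb
      linarith
    linarith
end

section
/- Let E, F be Banach lattices where F has order continuous norm. Then the space r-L_oc(E,F) of differences of positive order continuous operators is a Banach space under the enveloping norm ‖T‖ = inf{‖S‖ : S order continuous, -S ≤ T ≤ S}. -/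
open Filter Topology

variable {E F : Type*}
  [NormedAddCommGroup E] [Lattice E] [HasSolidNorm E] [IsOrderedAddMonoid E] [NormedSpace ℝ E] [CompleteSpace E]
  [NormedAddCommGroup F] [Lattice F] [HasSolidNorm F] [IsOrderedAddMonoid F] [NormedSpace ℝ F] [CompleteSpace F]

/-- A (positive) operator `S` is order continuous if it carries downward-directed sets
with infimum `0` to sets with infimum `0`. -/
def IsOrderCont (S : E →L[ℝ] F) : Prop :=
  ∀ A : Set E, A.Nonempty → DirectedOn (· ≥ ·) A → IsGLB A 0 →
    IsGLB (S '' A) 0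

/-- The space of differences of positive order continuous operators. -/
def IsRegOcOp (T : E →L[ℝ] F) : Prop :=
  ∃ T₁ T₂ : E →L[ℝ] F, IsPosOp T₁ ∧ IsOrderCont T₁ ∧ IsPosOp T₂ ∧ IsOrderCont T₂ ∧
    T = T₁ - T₂

/-- The enveloping norm `‖T‖ = inf {‖S‖ : S order continuous, -S ≤ T ≤ S}`. -/
noncomputable def envNormOc (T : E →L[ℝ] F) : ℝ :=
  sInf {c : ℝ | ∃ S : E →L[ℝ] F, IsOrderCont S ∧ OpLE (-S) T ∧ OpLE T S ∧ c = ‖S‖}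

/-! ### Auxiliary lemmas -/

lemma opLE_apply' {A B : E →L[ℝ] F} (h : OpLE A B) {x : E} (hx : 0 ≤ x) : A x ≤ B x := by
  have := h x hx
  rw [ContinuousLinearMap.sub_apply] at this
  exact sub_nonneg.mp this

lemma opLE_of_forall' {A B : E →L[ℝ] F} (h : ∀ x : E, 0 ≤ x → A x ≤ B x) : OpLE A B := by
  intro x hx
  rw [ContinuousLinearMap.sub_apply]
  exact sub_nonneg.mpr (h x hx)

lemma posOp_add' {A B : E →L[ℝ] F} (hA : IsPosOp A) (hB : IsPosOp B) : IsPosOp (A + B) := by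
  intro x hx
  rw [ContinuousLinearMap.add_apply]
  exact add_nonneg (hA x hx) (hB x hx)

lemma posOp_mono' {S : E →L[ℝ] F} (h : IsPosOp S) {x y : E} (hxy : x ≤ y) : S x ≤ S y := by
  have := h (y - x) (sub_nonneg.mpr hxy)
  rw [map_sub] at this
  exact sub_nonneg.mp this

lemma posOp_of_opLE' {S T : E →L[ℝ] F} (h1 : OpLE (-S) T) (h2 : OpLE T S) : IsPosOp S := by
  intro x hx
  have h1' : -(S x) ≤ T x := by
    have := opLE_apply' h1 hx
    rwa [ContinuousLinearMap.neg_apply] at this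
  have h2' := opLE_apply' h2 hx
  exact (abs_nonneg _).trans (abs_le'.mpr ⟨le_rfl, h1'.trans h2'⟩)

lemma restrict_aux' {A : Set E} (hdir : DirectedOn (· ≥ ·) A) (hglb : IsGLB A 0)
    {x₀ : E} (hx₀ : x₀ ∈ A) :
    (A ∩ {x | x ≤ x₀}).Nonempty ∧ DirectedOn (· ≥ ·) (A ∩ {x | x ≤ x₀}) ∧
      IsGLB (A ∩ {x | x ≤ x₀}) 0 := by
  refine ⟨⟨x₀, hx₀, le_rfl⟩, ?_, ?_, ?_⟩
  · rintro x ⟨hxA, hxle⟩ y ⟨hyA, -⟩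
    obtain ⟨z, hzA, hzx, hzy⟩ := hdir x hxA y hyA
    exact ⟨z, ⟨hzA, le_trans hzx hxle⟩, hzx, hzy⟩
  · rintro x ⟨hxA, -⟩
    exact hglb.1 hxA
  · intro b hb
    apply hglb.2
    intro a haA
    obtain ⟨z, hzA, hza, hzx⟩ := hdir a haA x₀ hx₀
    exact le_trans (hb ⟨hzA, hzx⟩) hza

lemma oc_small'
    (hF : ∀ A : Set F, A.Nonempty → DirectedOn (· ≥ ·) A → IsGLB A 0 →
      ∀ ε : ℝ, 0 < ε → ∃ y ∈ A, ∀ z ∈ A, z ≤ y → ‖z‖ < ε)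
    {S : E →L[ℝ] F} (hpos : IsPosOp S) (hoc : IsOrderCont S)
    {A : Set E} (hne : A.Nonempty) (hdir : DirectedOn (· ≥ ·) A) (hglb : IsGLB A 0)
    {ε : ℝ} (hε : 0 < ε) : ∃ x ∈ A, ‖S x‖ < ε := by
  have hne' : (S '' A).Nonempty := hne.image S
  have hdir' : DirectedOn (· ≥ ·) (S '' A) := by
    rintro _ ⟨x, hx, rfl⟩ _ ⟨y, hy, rfl⟩
    obtain ⟨z, hz, hzx, hzy⟩ := hdir x hx y hy
    exact ⟨S z, ⟨z, hz, rfl⟩, posOp_mono' hpos hzx, posOp_mono' hpos hzy⟩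
  have hglb' := hoc A hne hdir hglb
  obtain ⟨y, ⟨a, ha, rfl⟩, hy⟩ := hF (S '' A) hne' hdir' hglb' ε hε
  exact ⟨a, ha, hy _ ⟨a, ha, rfl⟩ le_rfl⟩

lemma oc_of_small' {S : E →L[ℝ] F} (hpos : IsPosOp S)
    (h : ∀ A : Set E, A.Nonempty → DirectedOn (· ≥ ·) A → IsGLB A 0 →
      ∀ ε : ℝ, 0 < ε → ∃ x ∈ A, ‖S x‖ < ε) : IsOrderCont S := by
  intro A hne hdir hglb
  constructor
  · rintro _ ⟨x, hx, rfl⟩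
    exact hpos x (hglb.1 hx)
  · intro b hb
    have key : ∀ ε : ℝ, 0 < ε → ‖b ⊔ 0‖ < ε := by
      intro ε hε
      obtain ⟨x, hx, hxε⟩ := h A hne hdir hglb ε hε
      refine lt_of_le_of_lt (norm_le_norm_of_abs_le_abs ?_) hxε
      have h1 : 0 ≤ S x := hpos x (hglb.1 hx)
      calc |b ⊔ 0| = b ⊔ 0 := abs_of_nonneg le_sup_right
        _ ≤ S x := sup_le (hb ⟨x, hx, rfl⟩) h1
        _ = |S x| := (abs_of_nonneg h1).symm
    have h0 : ‖b ⊔ 0‖ = 0 := by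
      by_contra hne0
      exact absurd (key ‖b ⊔ 0‖ (lt_of_le_of_ne (norm_nonneg _) (Ne.symm hne0))) (lt_irrefl _)
    exact sup_eq_right.mp (norm_eq_zero.mp h0)

lemma oc_zero' : IsOrderCont (0 : E →L[ℝ] F) := by
  intro A hne hdir hglb
  have himg : (0 : E →L[ℝ] F) '' A = {0} := by
    apply Set.eq_singleton_iff_nonempty_unique_mem.mpr
    refine ⟨hne.image _, ?_⟩
    rintro _ ⟨x, hx, rfl⟩
    simp
  rw [himg]
  exact isGLB_singleton

lemma oc_add'
    (hF : ∀ A : Set F, A.Nonempty → DirectedOn (· ≥ ·) A → IsGLB A 0 →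
      ∀ ε : ℝ, 0 < ε → ∃ y ∈ A, ∀ z ∈ A, z ≤ y → ‖z‖ < ε)
    {S₁ S₂ : E →L[ℝ] F} (h1p : IsPosOp S₁) (h1 : IsOrderCont S₁)
    (h2p : IsPosOp S₂) (h2 : IsOrderCont S₂) : IsOrderCont (S₁ + S₂) := by
  apply oc_of_small' (posOp_add' h1p h2p)
  intro A hne hdir hglb ε hε
  obtain ⟨x₁, hx₁, hx₁ε⟩ := oc_small' hF h1p h1 hne hdir hglb (half_pos hε)
  obtain ⟨hne', hdir', hglb'⟩ := restrict_aux' hdir hglb hx₁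
  obtain ⟨x, ⟨hxA, hxle⟩, hxε⟩ := oc_small' hF h2p h2 hne' hdir' hglb' (half_pos hε)
  refine ⟨x, hxA, ?_⟩
  have h0x : 0 ≤ x := hglb.1 hxA
  have hb : ‖S₁ x‖ ≤ ‖S₁ x₁‖ := by
    apply norm_le_norm_of_abs_le_abs
    rw [abs_of_nonneg (h1p x h0x), abs_of_nonneg (h1p x₁ (hglb.1 hx₁))]
    exact posOp_mono' h1p hxle
  calc ‖(S₁ + S₂) x‖ = ‖S₁ x + S₂ x‖ := by rw [ContinuousLinearMap.add_apply]
    _ ≤ ‖S₁ x‖ + ‖S₂ x‖ := norm_add_le _ _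
    _ < ε / 2 + ε / 2 := add_lt_add_of_le_of_lt (hb.trans hx₁ε.le) hxε
    _ = ε := add_halves ε

lemma oc_dominated'
    (hF : ∀ A : Set F, A.Nonempty → DirectedOn (· ≥ ·) A → IsGLB A 0 →
      ∀ ε : ℝ, 0 < ε → ∃ y ∈ A, ∀ z ∈ A, z ≤ y → ‖z‖ < ε)
    {T S : E →L[ℝ] F} (hT : IsPosOp T) (hS : IsPosOp S) (hoc : IsOrderCont S)
    (hdom : ∀ x : E, 0 ≤ x → T x ≤ S x) : IsOrderCont T := by
  apply oc_of_small' hT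
  intro A hne hdir hglb ε hε
  obtain ⟨x, hx, hxε⟩ := oc_small' hF hS hoc hne hdir hglb hε
  refine ⟨x, hx, lt_of_le_of_lt (norm_le_norm_of_abs_le_abs ?_) hxε⟩
  have h0 := hglb.1 hx
  rw [abs_of_nonneg (hT x h0), abs_of_nonneg (hS x h0)]
  exact hdom x h0

lemma oc_limit'
    (hF : ∀ A : Set F, A.Nonempty → DirectedOn (· ≥ ·) A → IsGLB A 0 →
      ∀ ε : ℝ, 0 < ε → ∃ y ∈ A, ∀ z ∈ A, z ≤ y → ‖z‖ < ε)
    {S : ℕ → E →L[ℝ] F} {L : E →L[ℝ] F} (hpos : ∀ m, IsPosOp (S m))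
    (hoc : ∀ m, IsOrderCont (S m)) (hLpos : IsPosOp L)
    (hlim : Tendsto S atTop (𝓝 L)) : IsOrderCont L := by
  apply oc_of_small' hLpos
  intro A hne hdir hglb ε hε
  obtain ⟨x₀, hx₀⟩ := hne
  obtain ⟨hne', hdir', hglb'⟩ := restrict_aux' hdir hglb hx₀
  have hx0pos : (0:ℝ) < ‖x₀‖ + 1 := by positivity
  have hδ : 0 < ε / (2 * (‖x₀‖ + 1)) := by positivity
  obtain ⟨m, hm⟩ := Metric.tendsto_atTop.mp hlim _ hδ
  have hm' : ‖S m - L‖ < ε / (2 * (‖x₀‖ + 1)) := by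
    have := hm m le_rfl
    rwa [dist_eq_norm] at this
  obtain ⟨x, ⟨hxA, hxle⟩, hxε⟩ := oc_small' hF (hpos m) (hoc m) hne' hdir' hglb' (half_pos hε)
  refine ⟨x, hxA, ?_⟩
  have h0x : 0 ≤ x := hglb.1 hxA
  have hxnorm : ‖x‖ ≤ ‖x₀‖ := by
    apply norm_le_norm_of_abs_le_abs
    rw [abs_of_nonneg h0x, abs_of_nonneg (le_trans h0x hxle)]
    exact hxle
  have h1 : ‖L x - S m x‖ ≤ ‖S m - L‖ * ‖x‖ := by
    have h := (S m - L).le_opNorm x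
    rw [ContinuousLinearMap.sub_apply] at h
    calc ‖L x - S m x‖ = ‖S m x - L x‖ := norm_sub_rev _ _
      _ ≤ ‖S m - L‖ * ‖x‖ := h
  have h2 : ‖S m - L‖ * ‖x‖ ≤ (ε / (2 * (‖x₀‖ + 1))) * (‖x₀‖ + 1) :=
    mul_le_mul hm'.le (hxnorm.trans (by linarith)) (norm_nonneg _) hδ.le
  have h3 : (ε / (2 * (‖x₀‖ + 1))) * (‖x₀‖ + 1) = ε / 2 := by
    field_simp
  have hLx : L x = S m x + (L x - S m x) := by abel
  calc ‖L x‖ = ‖S m x + (L x - S m x)‖ := by rw [← hLx]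
    _ ≤ ‖S m x‖ + ‖L x - S m x‖ := norm_add_le _ _
    _ < ε / 2 + ε / 2 := add_lt_add_of_lt_of_le hxε (h1.trans (h2.trans_eq h3))
    _ = ε := add_halves ε

lemma envNormOc_nonneg' (T : E →L[ℝ] F) : 0 ≤ envNormOc T := by
  apply Real.sInf_nonneg
  rintro c ⟨S, -, -, -, rfl⟩
  exact norm_nonneg S

/-- auxiliary index sequence -/
def auxSeq (Nf : ℕ → ℕ) : ℕ → ℕ
  | 0 => Nf 0
  | (k+1) => max (auxSeq Nf k + 1) (Nf (k+1))

set_option maxHeartbeats 1000000 in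
/-- If the norm of `F` is order continuous then `r-L_oc(E,F)` is a Banach space under
the enveloping norm: every Cauchy sequence w.r.t. the enveloping norm converges, in the
enveloping norm, to a difference of positive order continuous operators. -/
theorem regOc_banachSpace_envNorm
    (hF : ∀ A : Set F, A.Nonempty → DirectedOn (· ≥ ·) A → IsGLB A 0 →
      ∀ ε : ℝ, 0 < ε → ∃ y ∈ A, ∀ z ∈ A, z ≤ y → ‖z‖ < ε) :
    ∀ T : ℕ → E →L[ℝ] F, (∀ n, IsRegOcOp (T n)) →
      (∀ ε : ℝ, 0 < ε → ∃ N : ℕ, ∀ m ≥ N, ∀ n ≥ N, envNormOc (T m - T n) < ε) →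
      ∃ L : E →L[ℝ] F, IsRegOcOp L ∧
        Tendsto (fun n => envNormOc (T n - L)) atTop (𝓝 0) := by
  intro T hreg hcauchy
  classical
  -- every difference of regular oc operators has an oc dominator
  have hdomNE : ∀ U V : E →L[ℝ] F, IsRegOcOp U → IsRegOcOp V →
      ∃ S : E →L[ℝ] F, IsOrderCont S ∧ OpLE (-S) (U - V) ∧ OpLE (U - V) S := by
    rintro U V ⟨A, B, hA, hAoc, hB, hBoc, rfl⟩ ⟨C, D, hC, hCoc, hD, hDoc, rfl⟩
    refine ⟨A + B + C + D, ?_, ?_, ?_⟩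
    · exact oc_add' hF (posOp_add' (posOp_add' hA hB) hC)
        (oc_add' hF (posOp_add' hA hB) (oc_add' hF hA hAoc hB hBoc) hC hCoc) hD hDoc
    · show IsPosOp ((A - B - (C - D)) - -(A + B + C + D))
      have heq : ((A - B - (C - D)) - -(A + B + C + D)) = (A + A) + (D + D) := by
        ext y
        simp only [ContinuousLinearMap.add_apply, ContinuousLinearMap.sub_apply,
          ContinuousLinearMap.neg_apply]
        abel
      rw [heq]
      exact posOp_add' (posOp_add' hA hA) (posOp_add' hD hD)
    · show IsPosOp ((A + B + C + D) - (A - B - (C - D)))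
      have heq : ((A + B + C + D) - (A - B - (C - D))) = (B + B) + (C + C) := by
        ext y
        simp only [ContinuousLinearMap.add_apply, ContinuousLinearMap.sub_apply]
        abel
      rw [heq]
      exact posOp_add' (posOp_add' hB hB) (posOp_add' hC hC)
  -- an operator norm bound from a dominator
  have hbd : ∀ U S : E →L[ℝ] F, OpLE (-S) U → OpLE U S → ‖U‖ ≤ 2 * ‖S‖ := by
    intro U S h1 h2
    have habs : ∀ y : E, 0 ≤ y → ‖U y‖ ≤ ‖S y‖ := by
      intro y hy
      apply norm_le_norm_of_abs_le_abs
      have h1' : -(S y) ≤ U y := by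
        have := opLE_apply' h1 hy
        rwa [ContinuousLinearMap.neg_apply] at this
      have h2' := opLE_apply' h2 hy
      have hSy : 0 ≤ S y := (abs_nonneg _).trans (abs_le'.mpr ⟨le_rfl, h1'.trans h2'⟩)
      rw [abs_of_nonneg hSy]
      exact abs_le'.mpr ⟨h2', neg_le.mp h1'⟩
    apply ContinuousLinearMap.opNorm_le_bound _ (by positivity)
    intro x
    have hp : ‖x⁺‖ ≤ ‖x‖ := by
      apply norm_le_norm_of_abs_le_abs
      rw [abs_of_nonneg (posPart_nonneg x)]
      exact (le_add_of_nonneg_right (negPart_nonneg x)).trans_eq (posPart_add_negPart x)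
    have hnn : ‖x⁻‖ ≤ ‖x‖ := by
      apply norm_le_norm_of_abs_le_abs
      rw [abs_of_nonneg (negPart_nonneg x)]
      exact (le_add_of_nonneg_left (posPart_nonneg x)).trans_eq (posPart_add_negPart x)
    calc ‖U x‖ = ‖U x⁺ - U x⁻‖ := by rw [← map_sub, posPart_sub_negPart]
      _ ≤ ‖U x⁺‖ + ‖U x⁻‖ := norm_sub_le _ _
      _ ≤ ‖S x⁺‖ + ‖S x⁻‖ := add_le_add (habs _ (posPart_nonneg x)) (habs _ (negPart_nonneg x))
      _ ≤ ‖S‖ * ‖x⁺‖ + ‖S‖ * ‖x⁻‖ := add_le_add (S.le_opNorm _) (S.le_opNorm _)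
      _ ≤ ‖S‖ * ‖x‖ + ‖S‖ * ‖x‖ := add_le_add
          (mul_le_mul_of_nonneg_left hp (norm_nonneg S))
          (mul_le_mul_of_nonneg_left hnn (norm_nonneg S))
      _ = 2 * ‖S‖ * ‖x‖ := by ring
  -- the sequence is Cauchy in operator norm
  have hcs : CauchySeq T := by
    rw [Metric.cauchySeq_iff]
    intro ε hε
    obtain ⟨N, hN⟩ := hcauchy (ε / 4) (by positivity)
    refine ⟨N, fun m hm n hn => ?_⟩
    obtain ⟨S0, h0a, h0b, h0c⟩ := hdomNE (T m) (T n) (hreg m) (hreg n)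
    have hcau := hN m hm n hn
    unfold envNormOc at hcau
    have hne0 : {c : ℝ | ∃ S : E →L[ℝ] F, IsOrderCont S ∧ OpLE (-S) (T m - T n) ∧
        OpLE (T m - T n) S ∧ c = ‖S‖}.Nonempty := ⟨‖S0‖, S0, h0a, h0b, h0c, rfl⟩
    obtain ⟨c, ⟨S, hSa, hSb, hSc, rfl⟩, hlt⟩ := exists_lt_of_csInf_lt hne0 hcau
    rw [dist_eq_norm]
    calc ‖T m - T n‖ ≤ 2 * ‖S‖ := hbd _ _ hSb hSc
      _ < 2 * (ε / 4) := by linarith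
      _ < ε := by linarith
  obtain ⟨L, hL⟩ := cauchySeq_tendsto_of_complete hcs
  -- select a rapidly Cauchy subsequence
  choose Nf hNf using fun k : ℕ => hcauchy ((1/2 : ℝ)^k) (by positivity)
  set nn : ℕ → ℕ := auxSeq Nf with hnn
  have hnn_succ : ∀ k, nn k < nn (k+1) := fun k =>
    lt_of_lt_of_le (Nat.lt_succ_self _) (le_max_left _ _)
  have hnnN : ∀ k, Nf k ≤ nn k := by
    intro k
    cases k with
    | zero => exact le_rfl
    | succ k => exact le_max_right _ _
  have hmono : StrictMono nn := strictMono_nat_of_lt_succ hnn_succ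
  have hself : ∀ k, k ≤ nn k := fun k => hmono.le_apply
  have hstep : ∀ k, envNormOc (T (nn (k+1)) - T (nn k)) < (1/2 : ℝ)^k := fun k =>
    hNf k _ (le_trans (hnnN k) (hnn_succ k).le) _ (hnnN k)
  -- choose dominators for the consecutive differences
  have hSex : ∀ k : ℕ, ∃ S : E →L[ℝ] F, IsOrderCont S ∧
      OpLE (-S) (T (nn (k+1)) - T (nn k)) ∧ OpLE (T (nn (k+1)) - T (nn k)) S ∧
      ‖S‖ < (1/2 : ℝ)^k := by
    intro k
    obtain ⟨S0, h0a, h0b, h0c⟩ := hdomNE _ _ (hreg (nn (k+1))) (hreg (nn k))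
    have hcau := hstep k
    unfold envNormOc at hcau
    have hne0 : {c : ℝ | ∃ S' : E →L[ℝ] F, IsOrderCont S' ∧
        OpLE (-S') (T (nn (k+1)) - T (nn k)) ∧ OpLE (T (nn (k+1)) - T (nn k)) S' ∧
        c = ‖S'‖}.Nonempty := ⟨‖S0‖, S0, h0a, h0b, h0c, rfl⟩
    obtain ⟨c, ⟨S, hSa, hSb, hSc, rfl⟩, hlt⟩ := exists_lt_of_csInf_lt hne0 hcau
    exact ⟨S, hSa, hSb, hSc, hlt⟩
  choose S hSoc hSlo hShi hSnorm using hSex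
  have hSpos : ∀ k, IsPosOp (S k) := fun k => posOp_of_opLE' (hSlo k) (hShi k)
  -- geometric series facts
  have hgeo : ∀ k : ℕ, Summable (fun j : ℕ => ((1:ℝ)/2)^(k + j)) := by
    intro k
    have := (summable_geometric_of_lt_one (by norm_num : (0:ℝ) ≤ 1/2)
      (by norm_num : (1:ℝ)/2 < 1)).mul_left (((1:ℝ)/2)^k)
    simpa [pow_add] using this
  have hSnormsum : ∀ k : ℕ, Summable (fun j : ℕ => ‖S (k + j)‖) := fun k =>
    Summable.of_nonneg_of_le (fun j => norm_nonneg _) (fun j => (hSnorm (k+j)).le) (hgeo k)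
  have hSsum : ∀ k : ℕ, Summable (fun j : ℕ => S (k + j)) := fun k =>
    Summable.of_norm (hSnormsum k)
  set R : ℕ → E →L[ℝ] F := fun k => ∑' j, S (k + j) with hRdef
  have hR : ∀ k, HasSum (fun j => S (k + j)) (R k) := fun k => (hSsum k).hasSum
  have hRx : ∀ (k : ℕ) (x : E), HasSum (fun j => S (k + j) x) (R k x) := fun k x => by
    simpa using (hR k).mapL (ContinuousLinearMap.apply ℝ F x)
  have hRpos : ∀ k, IsPosOp (R k) := by
    intro k x hx
    exact hasSum_le (fun j => hSpos (k+j) x hx) hasSum_zero (hRx k x)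
  have hRnorm : ∀ k, ‖R k‖ ≤ (1/2 : ℝ)^k * 2 := by
    intro k
    have h1 : ‖R k‖ ≤ ∑' j, ‖S (k + j)‖ := norm_tsum_le_tsum_norm (hSnormsum k)
    have h2 : ∑' j, ‖S (k + j)‖ ≤ ∑' j, ((1:ℝ)/2)^(k + j) :=
      Summable.tsum_le_tsum (fun j => (hSnorm (k+j)).le) (hSnormsum k) (hgeo k)
    have h3 : ∑' j, ((1:ℝ)/2)^(k + j) = (1/2 : ℝ)^k * 2 := by
      simp only [pow_add]
      rw [tsum_mul_left, tsum_geometric_of_lt_one (by norm_num) (by norm_num)]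
      norm_num
    linarith
  -- partial sums are positive and order continuous
  have hPoc : ∀ k m : ℕ, IsPosOp (∑ j ∈ Finset.range m, S (k + j)) ∧
      IsOrderCont (∑ j ∈ Finset.range m, S (k + j)) := by
    intro k m
    induction m with
    | zero =>
      simp only [Finset.range_zero, Finset.sum_empty]
      exact ⟨fun x hx => by simp, oc_zero'⟩
    | succ m ih =>
      rw [Finset.sum_range_succ]
      exact ⟨posOp_add' ih.1 (hSpos _), oc_add' hF ih.1 ih.2 (hSpos _) (hSoc _)⟩
  have hRoc : ∀ k, IsOrderCont (R k) := by
    intro k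
    exact oc_limit' hF (fun m => (hPoc k m).1) (fun m => (hPoc k m).2) (hRpos k)
      ((hR k).tendsto_sum_nat)
  -- telescoping bounds
  have hTel : ∀ (k m : ℕ) (x : E), 0 ≤ x →
      T (nn (k+m)) x - T (nn k) x ≤ (∑ j ∈ Finset.range m, S (k + j)) x ∧
      -((∑ j ∈ Finset.range m, S (k + j)) x) ≤ T (nn (k+m)) x - T (nn k) x := by
    intro k m x hx
    induction m with
    | zero => simp
    | succ m ih =>
      rw [show k + (m+1) = k + m + 1 from (Nat.add_assoc k m 1).symm]
      obtain ⟨ih1, ih2⟩ := ih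
      have h1 : T (nn (k+m+1)) x - T (nn (k+m)) x ≤ S (k+m) x := by
        have := opLE_apply' (hShi (k+m)) hx
        rwa [ContinuousLinearMap.sub_apply] at this
      have h2 : -(S (k+m) x) ≤ T (nn (k+m+1)) x - T (nn (k+m)) x := by
        have := opLE_apply' (hSlo (k+m)) hx
        rwa [ContinuousLinearMap.sub_apply, ContinuousLinearMap.neg_apply] at this
      rw [Finset.sum_range_succ, ContinuousLinearMap.add_apply]
      constructor
      · calc T (nn (k+m+1)) x - T (nn k) x
            = (T (nn (k+m+1)) x - T (nn (k+m)) x) + (T (nn (k+m)) x - T (nn k) x) := by abel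
          _ ≤ S (k+m) x + (∑ j ∈ Finset.range m, S (k + j)) x := add_le_add h1 ih1
          _ = (∑ j ∈ Finset.range m, S (k + j)) x + S (k+m) x := add_comm _ _
      · calc -((∑ j ∈ Finset.range m, S (k + j)) x + S (k+m) x)
            = -(S (k+m) x) + -((∑ j ∈ Finset.range m, S (k + j)) x) := by abel
          _ ≤ (T (nn (k+m+1)) x - T (nn (k+m)) x) + (T (nn (k+m)) x - T (nn k) x) :=
              add_le_add h2 ih2
          _ = T (nn (k+m+1)) x - T (nn k) x := by abel
  have hTelR : ∀ (k m : ℕ) (x : E), 0 ≤ x →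
      T (nn (k+m)) x - T (nn k) x ≤ R k x ∧ -(R k x) ≤ T (nn (k+m)) x - T (nn k) x := by
    intro k m x hx
    have hsum_le : (∑ j ∈ Finset.range m, S (k + j)) x ≤ R k x := by
      rw [ContinuousLinearMap.sum_apply]
      exact sum_le_hasSum (Finset.range m) (fun j _ => hSpos (k+j) x hx) (hRx k x)
    obtain ⟨h1, h2⟩ := hTel k m x hx
    exact ⟨h1.trans hsum_le, le_trans (neg_le_neg hsum_le) h2⟩
  -- pass to the limit in m
  have hLbound : ∀ (k : ℕ) (x : E), 0 ≤ x →
      L x - T (nn k) x ≤ R k x ∧ -(R k x) ≤ L x - T (nn k) x := by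
    intro k x hx
    have h1 : Tendsto (fun m => nn (k+m)) atTop atTop :=
      tendsto_atTop_mono (fun m => le_trans (Nat.le_add_left m k) (hself (k+m))) tendsto_id
    have h2 : Tendsto (fun m => T (nn (k+m))) atTop (𝓝 L) := hL.comp h1
    have h3 : Tendsto (fun m => T (nn (k+m)) x) atTop (𝓝 (L x)) := by
      have := ((ContinuousLinearMap.apply ℝ F x).continuous.tendsto L).comp h2
      exact this
    have htend : Tendsto (fun m => T (nn (k+m)) x - T (nn k) x) atTop
        (𝓝 (L x - T (nn k) x)) := h3.sub tendsto_const_nhds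
    constructor
    · exact le_of_tendsto htend (Eventually.of_forall fun m => (hTelR k m x hx).1)
    · exact ge_of_tendsto htend (Eventually.of_forall fun m => (hTelR k m x hx).2)
  -- L is a regular order continuous operator
  obtain ⟨A, B, hA, hAoc, hB, hBoc, hAB⟩ := hreg (nn 0)
  have hGpos : IsPosOp (L - T (nn 0) + R 0) := by
    intro x hx
    rw [ContinuousLinearMap.add_apply, ContinuousLinearMap.sub_apply]
    calc (0:F) = -(R 0 x) + R 0 x := (neg_add_cancel _).symm
      _ ≤ (L x - T (nn 0) x) + R 0 x := add_le_add_left (hLbound 0 x hx).2 _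
  have hGoc : IsOrderCont (L - T (nn 0) + R 0) := by
    apply oc_dominated' hF hGpos (posOp_add' (hRpos 0) (hRpos 0))
      (oc_add' hF (hRpos 0) (hRoc 0) (hRpos 0) (hRoc 0))
    intro x hx
    rw [ContinuousLinearMap.add_apply, ContinuousLinearMap.sub_apply,
      ContinuousLinearMap.add_apply]
    exact add_le_add_left (hLbound 0 x hx).1 _
  have hLreg : IsRegOcOp L := by
    refine ⟨A + (L - T (nn 0) + R 0), B + R 0, posOp_add' hA hGpos,
      oc_add' hF hA hAoc hGpos hGoc, posOp_add' hB (hRpos 0),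
      oc_add' hF hB hBoc (hRpos 0) (hRoc 0), ?_⟩
    ext x
    simp only [ContinuousLinearMap.add_apply, ContinuousLinearMap.sub_apply]
    rw [hAB]
    simp only [ContinuousLinearMap.sub_apply]
    abel
  refine ⟨L, hLreg, ?_⟩
  rw [Metric.tendsto_atTop]
  intro ε hε
  obtain ⟨N₁, hN₁⟩ := hcauchy (ε / 4) (by positivity)
  obtain ⟨k₀, hk₀⟩ := exists_pow_lt_of_lt_one (show (0:ℝ) < ε/8 by positivity)
    (show (1:ℝ)/2 < 1 by norm_num)
  set k := max N₁ k₀ with hk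
  have hkN : N₁ ≤ nn k := le_trans (le_max_left _ _) (hself k)
  refine ⟨N₁, fun m hm => ?_⟩
  rw [Real.dist_eq, sub_zero, abs_of_nonneg (envNormOc_nonneg' _)]
  obtain ⟨S₀, h₀a, h₀b, h₀c⟩ := hdomNE (T m) (T (nn k)) (hreg m) (hreg (nn k))
  have hcau := hN₁ m hm (nn k) hkN
  unfold envNormOc at hcau
  have hne0 : {c : ℝ | ∃ S' : E →L[ℝ] F, IsOrderCont S' ∧
      OpLE (-S') (T m - T (nn k)) ∧ OpLE (T m - T (nn k)) S' ∧
      c = ‖S'‖}.Nonempty := ⟨‖S₀‖, S₀, h₀a, h₀b, h₀c, rfl⟩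
  obtain ⟨c, ⟨S₁, hS₁oc, hS₁lo, hS₁hi, rfl⟩, hc⟩ := exists_lt_of_csInf_lt hne0 hcau
  have hS₁pos := posOp_of_opLE' hS₁lo hS₁hi
  have hWoc := oc_add' hF hS₁pos hS₁oc (hRpos k) (hRoc k)
  have hWhi : OpLE (T m - L) (S₁ + R k) := by
    apply opLE_of_forall'
    intro x hx
    have h1 : T m x - T (nn k) x ≤ S₁ x := by
      have := opLE_apply' hS₁hi hx
      rwa [ContinuousLinearMap.sub_apply] at this
    have h2 : T (nn k) x - L x ≤ R k x := by
      have := (hLbound k x hx).2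
      have := neg_le.mp this
      rwa [neg_sub] at this
    calc (T m - L) x = (T m x - T (nn k) x) + (T (nn k) x - L x) := by
          rw [ContinuousLinearMap.sub_apply]; abel
      _ ≤ S₁ x + R k x := add_le_add h1 h2
      _ = (S₁ + R k) x := (ContinuousLinearMap.add_apply _ _ _).symm
  have hWlo : OpLE (-(S₁ + R k)) (T m - L) := by
    apply opLE_of_forall'
    intro x hx
    have h1 : -(S₁ x) ≤ T m x - T (nn k) x := by
      have := opLE_apply' hS₁lo hx
      rwa [ContinuousLinearMap.sub_apply, ContinuousLinearMap.neg_apply] at this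
    have h2 : -(R k x) ≤ T (nn k) x - L x := by
      have := neg_le_neg (hLbound k x hx).1
      rwa [neg_sub] at this
    calc (-(S₁ + R k)) x = -(S₁ x) + -(R k x) := by
          rw [ContinuousLinearMap.neg_apply, ContinuousLinearMap.add_apply]; abel
      _ ≤ (T m x - T (nn k) x) + (T (nn k) x - L x) := add_le_add h1 h2
      _ = (T m - L) x := by rw [ContinuousLinearMap.sub_apply]; abel
  have hle : envNormOc (T m - L) ≤ ‖S₁ + R k‖ := by
    unfold envNormOc
    apply csInf_le
    · refine ⟨0, ?_⟩
      rintro c ⟨S', -, -, -, rfl⟩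
      exact norm_nonneg _
    · exact ⟨S₁ + R k, hWoc, hWlo, hWhi, rfl⟩
  have hpow : (1/2 : ℝ)^k ≤ (1/2 : ℝ)^k₀ :=
    pow_le_pow_of_le_one (by norm_num) (by norm_num) (le_max_right _ _)
  calc envNormOc (T m - L) ≤ ‖S₁ + R k‖ := hle
    _ ≤ ‖S₁‖ + ‖R k‖ := norm_add_le _ _
    _ < ε/4 + (1/2 : ℝ)^k * 2 := add_lt_add_of_lt_of_le hc (hRnorm k)
    _ ≤ ε/4 + ε/4 := by nlinarith
    _ < ε := by linarith
end
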